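/- arXiv:1407.0359 — 4 statements merged into one kernel-verified Lean document; each statement's English description precedes it below -/
import Mathlib

section
/- Let C be a nonempty weak* compact convex subset of a dual Banach space E and let T : C → C be weak*-continuous and nonexpansive. Then the set Fix T of fixed points of T is nonempty and there exists a nonexpansive retraction R : C → Fix T (i.e., R is nonexpansive, R(C) ⊆ Fix T, and Rx = x for all x ∈ Fix T). -/
/-!
For `ε ∈ (0, 1]` and `x ∈ C` the map `y ↦ (1 - ε) • T y + ε • x` is a norm contraction of the
norm-closed set `C`, so it has a unique fixed point `z_ε(x)` (a resolvent of `T`), and the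
estimate `‖z - w‖ ≤ (1 - ε) ‖z - w‖ + ε ‖x - y‖` shows `x ↦ z_ε(x)` is nonexpansive. Letting
`ε → 0` along one ultrafilter, weak* compactness gives a pointwise weak* limit `R x ∈ C`. The
dual norm is weak* lower semicontinuous, so `R` is still nonexpansive; and since
`z_ε - T z_ε = ε • (x - T z_ε) → 0` and `T` is weak* continuous, `R x` is a fixed point.
A fixed point `x` of `T` is its own resolvent, hence `R x = x`.
-/

open Filter Topology Set Function

theorem norm_sub_le_of_eq_smul_add_smul {F : Type*} [SeminormedAddCommGroup F] [NormedSpace ℝ F]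
    {ε : ℝ} (hε : ε ∈ Ioc 0 1) {z w u v x y : F}
    (hz : z = (1 - ε) • u + ε • x) (hw : w = (1 - ε) • v + ε • y) (huv : ‖u - v‖ ≤ ‖z - w‖) :
    ‖z - w‖ ≤ ‖x - y‖ := by
  have hzw : z - w = (1 - ε) • (u - v) + ε • (x - y) := by rw [hz, hw]; module
  have : ‖z - w‖ ≤ (1 - ε) * ‖z - w‖ + ε * ‖x - y‖ := calc
    ‖z - w‖ ≤ ‖(1 - ε) • (u - v)‖ + ‖ε • (x - y)‖ := hzw ▸ norm_add_le _ _
    _ = (1 - ε) * ‖u - v‖ + ε * ‖x - y‖ := by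
      rw [norm_smul, norm_smul, Real.norm_of_nonneg (by linarith [hε.2]),
        Real.norm_of_nonneg hε.1.le]
    _ ≤ (1 - ε) * ‖z - w‖ + ε * ‖x - y‖ := by gcongr; linarith [hε.2]
  exact le_of_mul_le_mul_left (by linarith) hε.1

theorem LipschitzOnWith.exists_eq_smul_add_smul {F : Type*} [NormedAddCommGroup F]
    [NormedSpace ℝ F] [CompleteSpace F] {C : Set F} {T : F → F} (hT : LipschitzOnWith 1 T C)
    (hC : IsClosed C) (hconv : Convex ℝ C) (hTC : MapsTo T C C) {x : F} (hx : x ∈ C)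
    {ε : ℝ} (hε : ε ∈ Ioc 0 1) : ∃ z ∈ C, z = (1 - ε) • T z + ε • x := by
  have hε' : 0 ≤ 1 - ε := by linarith [hε.2]
  set f : F → F := fun y => (1 - ε) • T y + ε • x
  have hf : MapsTo f C C := fun y hy => hconv (hTC hy) hx hε' hε.1.le (by ring)
  have hfl : LipschitzOnWith (1 - ε).toNNReal f C := by
    refine lipschitzOnWith_iff_norm_sub_le.2 fun a ha b hb => ?_
    have hfab : f a - f b = (1 - ε) • (T a - T b) := by simp only [f]; module
    rw [hfab, norm_smul, Real.norm_of_nonneg hε', Real.coe_toNNReal _ hε']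
    gcongr
    simpa using hT.norm_sub_le ha hb
  have hcontr : ContractingWith (1 - ε).toNNReal (hf.restrict f C C) :=
    ⟨by simpa using hε.1, hf.lipschitzOnWith_iff_restrict.1 hfl⟩
  obtain ⟨z, hzC, hz, -⟩ := hcontr.exists_fixedPoint' hC.isComplete hf hx (edist_ne_top _ _)
  exact ⟨z, hzC, hz.symm⟩

theorem isFixedPt_of_tendsto_of_eq_smul_add_smul {ι X : Type*} [AddCommGroup X] [Module ℝ X]
    [TopologicalSpace X] [IsTopologicalAddGroup X] [ContinuousSMul ℝ X] [T2Space X]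
    {l : Filter ι} [l.NeBot] {ε : ι → ℝ} (hε : Tendsto ε l (𝓝 0)) {T : X → X} {x r : X}
    {z : ι → X} (hz : ∀ i, z i = (1 - ε i) • T (z i) + ε i • x) (hzr : Tendsto z l (𝓝 r))
    (hTz : Tendsto (fun i => T (z i)) l (𝓝 (T r))) : IsFixedPt T r := by
  have hdiff : ∀ i, z i - T (z i) = ε i • (x - T (z i)) := fun i => by
    linear_combination (norm := module) hz i
  have h0 : Tendsto (fun i => z i - T (z i)) l (𝓝 0) := by
    simpa only [hdiff, zero_smul] using hε.smul (tendsto_const_nhds.sub hTz)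
  exact (sub_eq_zero.1 (tendsto_nhds_unique (hzr.sub hTz) h0)).symm

theorem one_div_add_one_mem_Ioc (n : ℕ) : 1 / ((n : ℝ) + 1) ∈ Ioc 0 1 :=
  ⟨by positivity, by rw [div_le_one (by positivity)]; simp⟩

namespace WeakDual

theorem norm_toStrongDual_le_of_tendsto {𝕜 E ι : Type*} [NontriviallyNormedField 𝕜]
    [SeminormedAddCommGroup E] [NormedSpace 𝕜 E] {l : Filter ι} [l.NeBot]
    {f : ι → WeakDual 𝕜 E} {a : WeakDual 𝕜 E} (hf : Tendsto f l (𝓝 a)) {r : ℝ}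
    (hr : ∀ᶠ i in l, ‖toStrongDual (f i)‖ ≤ r) : ‖toStrongDual a‖ ≤ r := by
  simpa using (isClosed_closedBall 0 r).mem_of_tendsto hf (by simpa using hr)

variable {E : Type*} [NormedAddCommGroup E] [NormedSpace ℝ E]

def NonexpansiveOn (T : WeakDual ℝ E → WeakDual ℝ E) (C : Set (WeakDual ℝ E)) : Prop :=
  ∀ y ∈ C, ∀ z ∈ C, ‖toStrongDual (T y - T z)‖ ≤ ‖toStrongDual (y - z)‖

noncomputable def resolvent (C : Set (WeakDual ℝ E)) (T : WeakDual ℝ E → WeakDual ℝ E) (ε : ℝ)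
    (x : WeakDual ℝ E) : WeakDual ℝ E :=
  Classical.epsilon fun z => z ∈ C ∧ z = (1 - ε) • T z + ε • x

-- One ultrafilter for all `x`, so that limits of differences are differences of limits.
noncomputable def retraction (C : Set (WeakDual ℝ E)) (T : WeakDual ℝ E → WeakDual ℝ E)
    (x : WeakDual ℝ E) : WeakDual ℝ E :=
  limUnder (Ultrafilter.of (atTop : Filter ℕ) : Filter ℕ) fun n =>
    resolvent C T (1 / ((n : ℝ) + 1)) x

local notation "𝒰" => (Ultrafilter.of (atTop : Filter ℕ) : Filter ℕ)

namespace NonexpansiveOn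

variable {C : Set (WeakDual ℝ E)} {T : WeakDual ℝ E → WeakDual ℝ E} {ε : ℝ} {x : WeakDual ℝ E}

theorem norm_sub_le_of_eq_smul_add_smul (hT : NonexpansiveOn T C) (hε : ε ∈ Ioc 0 1)
    {y z w : WeakDual ℝ E} (hz : z ∈ C) (hw : w ∈ C) (hzx : z = (1 - ε) • T z + ε • x)
    (hwy : w = (1 - ε) • T w + ε • y) : ‖toStrongDual (z - w)‖ ≤ ‖toStrongDual (x - y)‖ :=
  _root_.norm_sub_le_of_eq_smul_add_smul (F := StrongDual ℝ E) hε hzx hwy (hT z hz w hw)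

theorem resolvent_spec (hT : NonexpansiveOn T C) (hC : IsClosed C) (hconv : Convex ℝ C)
    (hTC : MapsTo T C C) (hx : x ∈ C) (hε : ε ∈ Ioc 0 1) :
    resolvent C T ε x ∈ C ∧ resolvent C T ε x = (1 - ε) • T (resolvent C T ε x) + ε • x :=
  Classical.epsilon_spec <| LipschitzOnWith.exists_eq_smul_add_smul (F := StrongDual ℝ E)
    (T := fun y => toStrongDual (T (StrongDual.toWeakDual y)))
    (LipschitzOnWith.mk_one fun y hy z hz => by
      rw [dist_eq_norm, dist_eq_norm, ← map_sub]; exact hT _ hy _ hz)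
    (hC.preimage NormedSpace.Dual.toWeakDual_continuous)
    (hconv.linear_preimage StrongDual.toWeakDual.toLinearMap) (fun _ hy => hTC hy) hx hε

theorem resolvent_eq_self (hT : NonexpansiveOn T C) (hC : IsClosed C) (hconv : Convex ℝ C)
    (hTC : MapsTo T C C) (hx : x ∈ C) (hTx : IsFixedPt T x) (hε : ε ∈ Ioc 0 1) :
    resolvent C T ε x = x := by
  obtain ⟨hzC, hz⟩ := hT.resolvent_spec hC hconv hTC hx hε
  have hxx : x = (1 - ε) • T x + ε • x := by rw [hTx.eq]; module
  have := hT.norm_sub_le_of_eq_smul_add_smul hε hzC hx hz hxx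
  rwa [sub_self, map_zero, norm_zero, norm_le_zero_iff, LinearEquiv.map_eq_zero_iff,
    sub_eq_zero] at this

theorem tendsto_resolvent_retraction (hT : NonexpansiveOn T C) (hC : IsCompact C)
    (hconv : Convex ℝ C) (hTC : MapsTo T C C) (hx : x ∈ C) :
    Tendsto (fun n : ℕ => resolvent C T (1 / ((n : ℝ) + 1)) x) 𝒰 (𝓝 (retraction C T x)) := by
  obtain ⟨r, -, hr⟩ := hC.ultrafilter_le_nhds'
    ((Ultrafilter.of atTop).map fun n : ℕ => resolvent C T (1 / ((n : ℝ) + 1)) x)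
    (Ultrafilter.mem_map.2 <| univ_mem' fun n =>
      (hT.resolvent_spec hC.isClosed hconv hTC hx (one_div_add_one_mem_Ioc n)).1)
  exact tendsto_nhds_limUnder ⟨r, hr⟩

theorem retraction_mem (hT : NonexpansiveOn T C) (hC : IsCompact C) (hconv : Convex ℝ C)
    (hTC : MapsTo T C C) (hx : x ∈ C) : retraction C T x ∈ C :=
  hC.isClosed.mem_of_tendsto (hT.tendsto_resolvent_retraction hC hconv hTC hx) <| .of_forall
    fun n => (hT.resolvent_spec hC.isClosed hconv hTC hx (one_div_add_one_mem_Ioc n)).1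

theorem isFixedPt_retraction (hT : NonexpansiveOn T C) (hC : IsCompact C) (hconv : Convex ℝ C)
    (hTC : MapsTo T C C) (hTc : ContinuousOn T C) (hx : x ∈ C) :
    IsFixedPt T (retraction C T x) := by
  have hspec n := hT.resolvent_spec hC.isClosed hconv hTC hx (one_div_add_one_mem_Ioc n)
  have hlim := hT.tendsto_resolvent_retraction hC hconv hTC hx
  refine isFixedPt_of_tendsto_of_eq_smul_add_smul
    (tendsto_one_div_add_atTop_nhds_zero_nat.mono_left (Ultrafilter.of_le _))
    (fun n => (hspec n).2) hlim ?_
  exact (hTc _ (hT.retraction_mem hC hconv hTC hx)).tendsto.comp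
    (tendsto_nhdsWithin_iff.2 ⟨hlim, .of_forall fun n => (hspec n).1⟩)

theorem nonexpansiveOn_retraction (hT : NonexpansiveOn T C) (hC : IsCompact C)
    (hconv : Convex ℝ C) (hTC : MapsTo T C C) : NonexpansiveOn (retraction C T) C := by
  intro y hy z hz
  have hspec {x} (hx : x ∈ C) n :=
    hT.resolvent_spec hC.isClosed hconv hTC hx (one_div_add_one_mem_Ioc n)
  refine norm_toStrongDual_le_of_tendsto ((hT.tendsto_resolvent_retraction hC hconv hTC hy).sub
    (hT.tendsto_resolvent_retraction hC hconv hTC hz)) (.of_forall fun n => ?_)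
  exact hT.norm_sub_le_of_eq_smul_add_smul (one_div_add_one_mem_Ioc n) (hspec hy n).1
    (hspec hz n).1 (hspec hy n).2 (hspec hz n).2

theorem retraction_eq_self (hT : NonexpansiveOn T C) (hC : IsCompact C) (hconv : Convex ℝ C)
    (hTC : MapsTo T C C) (hx : x ∈ C) (hTx : IsFixedPt T x) : retraction C T x = x := by
  have hlim := hT.tendsto_resolvent_retraction hC hconv hTC hx
  simp only [hT.resolvent_eq_self hC.isClosed hconv hTC hx hTx (one_div_add_one_mem_Ioc _)]
    at hlim
  exact (tendsto_const_nhds_iff.1 hlim).symm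

end NonexpansiveOn

end WeakDual

/-- If `T : C → C` is weak*-continuous and nonexpansive on a nonempty
weak* compact convex `C`, then `Fix T` is nonempty and there is a nonexpansive
retraction of `C` onto `Fix T`. -/
theorem stmt3 {E : Type*} [NormedAddCommGroup E] [NormedSpace ℝ E]
    (C : Set (WeakDual ℝ E)) (hne : C.Nonempty) (hcomp : IsCompact C) (hconv : Convex ℝ C)
    (T : WeakDual ℝ E → WeakDual ℝ E) (hT : Set.MapsTo T C C)
    (hTc : ContinuousOn T C)
    (hTne : ∀ y ∈ C, ∀ z ∈ C,
      ‖WeakDual.toStrongDual (T y - T z)‖ ≤ ‖WeakDual.toStrongDual (y - z)‖) :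
    {x | x ∈ C ∧ T x = x}.Nonempty ∧
    ∃ R : WeakDual ℝ E → WeakDual ℝ E,
      Set.MapsTo R C {x | x ∈ C ∧ T x = x} ∧
      (∀ y ∈ C, ∀ z ∈ C,
        ‖WeakDual.toStrongDual (R y - R z)‖ ≤ ‖WeakDual.toStrongDual (y - z)‖) ∧
      (∀ x, x ∈ C ∧ T x = x → R x = x) := by
  have hN : WeakDual.NonexpansiveOn T C := hTne
  have hR : MapsTo (WeakDual.retraction C T) C {x | x ∈ C ∧ T x = x} := fun x hx =>
    ⟨hN.retraction_mem hcomp hconv hT hx, hN.isFixedPt_retraction hcomp hconv hT hTc hx⟩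
  exact ⟨hne.image _ |>.mono hR.image_subset, WeakDual.retraction C T, hR,
    hN.nonexpansiveOn_retraction hcomp hconv hT,
    fun x ⟨hx, hTx⟩ => hN.retraction_eq_self hcomp hconv hT hx hTx⟩
end

section
/- (Ishikawa) Let C be a bounded convex subset of a Banach space, T : C → C nonexpansive, and γ ∈ (0,1). Then T_γ = (1−γ)I + γT is asymptotically regular: for every x ∈ C, lim_{n→∞} ‖T_γ^{n+1} x − T_γ^n x‖ = 0. -/
open Filter Topology

set_option maxHeartbeats 1000000

/-- Ishikawa: If `C` is a bounded convex subset of a Banach space,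
`T : C → C` is nonexpansive and `γ ∈ (0,1)`, then `T_γ = (1−γ)I + γT` is
asymptotically regular: `‖T_γ^{n+1} x − T_γ^n x‖ → 0` for every `x ∈ C`. -/
theorem stmt10 {X : Type*} [NormedAddCommGroup X] [NormedSpace ℝ X] [CompleteSpace X]
    (C : Set X) (hbdd : Bornology.IsBounded C) (hconv : Convex ℝ C)
    (T : X → X) (hT : Set.MapsTo T C C)
    (hTne : ∀ y ∈ C, ∀ z ∈ C, ‖T y - T z‖ ≤ ‖y - z‖)
    (γ : ℝ) (hγ : γ ∈ Set.Ioo (0 : ℝ) 1) (x : X) (hx : x ∈ C) :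
    Tendsto (fun n : ℕ =>
        ‖(fun y => (1 - γ) • y + γ • T y)^[n + 1] x -
         (fun y => (1 - γ) • y + γ • T y)^[n] x‖) atTop (𝓝 0) := by
  obtain ⟨hγ0, hγ1⟩ := hγ
  set S : X → X := fun y => (1 - γ) • y + γ • T y with hS
  set xs : ℕ → X := fun n => S^[n] x with hxs
  have hstep : ∀ n, xs (n + 1) = S (xs n) := by
    intro n; simp [hxs, Function.iterate_succ_apply']
  have hmem : ∀ n, xs n ∈ C := by
    intro n
    induction n with
    | zero => simpa [hxs] using hx
    | succ n ih =>
      rw [hstep n]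
      exact hconv ih (hT ih) (by linarith) (le_of_lt hγ0) (by ring)
  set d : ℕ → ℝ := fun n => ‖T (xs n) - xs n‖ with hd
  have hdnonneg : ∀ n, 0 ≤ d n := fun n => norm_nonneg _
  have hdiff : ∀ n, xs (n + 1) - xs n = γ • (T (xs n) - xs n) := by
    intro n; rw [hstep n]; simp only [hS]; module
  have hdiffnorm : ∀ n, ‖xs (n + 1) - xs n‖ = γ * d n := by
    intro n; rw [hdiff n, norm_smul, Real.norm_eq_abs, abs_of_pos hγ0]
  have hdmono : ∀ n, d (n + 1) ≤ d n := by
    intro n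
    have h1 : T (xs (n + 1)) - xs (n + 1)
        = (T (xs (n + 1)) - T (xs n)) + (1 - γ) • (T (xs n) - xs n) := by
      rw [hstep n]; simp only [hS]; module
    have h2 : ‖T (xs (n + 1)) - T (xs n)‖ ≤ ‖xs (n + 1) - xs n‖ :=
      hTne _ (hmem _) _ (hmem _)
    have h3 : d (n + 1) ≤ ‖T (xs (n + 1)) - T (xs n)‖ + ‖(1 - γ) • (T (xs n) - xs n)‖ := by
      show ‖T (xs (n + 1)) - xs (n + 1)‖ ≤ _
      rw [h1]; exact norm_add_le _ _
    have h4 : ‖(1 - γ) • (T (xs n) - xs n)‖ = (1 - γ) * d n := by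
      rw [norm_smul, Real.norm_eq_abs, abs_of_pos (by linarith)]
    rw [h4] at h3
    have h5 := hdiffnorm n
    linarith
  have hdanti : Antitone d := antitone_nat_of_succ_le hdmono
  have hE : ∀ n i : ℕ, ‖xs (i + n) - xs i‖ ≤ γ * ((n : ℝ) * d i) := by
    intro n
    induction n with
    | zero => intro i; simp
    | succ n ih =>
      intro i
      have h1 : ‖xs (i + (n + 1)) - xs i‖
          ≤ ‖xs (i + n + 1) - xs (i + n)‖ + ‖xs (i + n) - xs i‖ := by
        rw [show i + (n + 1) = i + n + 1 from rfl]
        exact norm_sub_le_norm_sub_add_norm_sub _ _ _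
      have h2 := hdiffnorm (i + n)
      have h3 : d (i + n) ≤ d i := hdanti (Nat.le_add_right i n)
      have h4 := ih i
      have hn : (0 : ℝ) ≤ (n : ℝ) := Nat.cast_nonneg n
      push_cast
      nlinarith
  have hbern : ∀ n : ℕ, (1 + (n : ℝ) * γ) * (1 - γ) ^ n ≤ 1 := by
    intro n
    induction n with
    | zero => simp
    | succ n ih =>
      have hp : (0 : ℝ) ≤ (1 - γ) ^ n := pow_nonneg (by linarith) n
      have hn : (0 : ℝ) ≤ (n : ℝ) := Nat.cast_nonneg n
      push_cast
      rw [pow_succ]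
      nlinarith [mul_nonneg hp (sq_nonneg γ), mul_nonneg (mul_nonneg hn hp) (sq_nonneg γ)]
  -- Key Goebel–Kirk / Ishikawa inequality
  have key : ∀ n i : ℕ, (1 + (n : ℝ) * γ) * d i * (1 - γ) ^ n - (d i - d (i + n))
      ≤ ‖T (xs (i + n)) - xs i‖ * (1 - γ) ^ n := by
    intro n
    induction n with
    | zero => intro i; simp [hd]
    | succ n ih =>
      intro i
      have IH := ih (i + 1)
      rw [show i + 1 + n = i + (n + 1) from by omega] at IH
      have hppos : (0 : ℝ) < (1 - γ) ^ n := pow_pos (by linarith) n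
      set A : ℝ := ‖T (xs (i + (n + 1))) - xs i‖ with hA
      set B : ℝ := ‖T (xs (i + (n + 1))) - xs (i + 1)‖ with hB
      set E : ℝ := ‖xs (i + (n + 1)) - xs i‖ with hEe
      have hid : (1 - γ) • (T (xs (i + (n + 1))) - xs i)
          = (T (xs (i + (n + 1))) - xs (i + 1)) - γ • (T (xs (i + (n + 1))) - T (xs i)) := by
        rw [hstep i]; simp only [hS]; module
      have h1 : B - γ * E ≤ (1 - γ) * A := by
        have e1 : (1 - γ) * A = ‖(1 - γ) • (T (xs (i + (n + 1))) - xs i)‖ := by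
          rw [norm_smul, Real.norm_eq_abs, abs_of_pos (by linarith)]
        rw [e1, hid]
        have e2 : B - ‖γ • (T (xs (i + (n + 1))) - T (xs i))‖
            ≤ ‖(T (xs (i + (n + 1))) - xs (i + 1)) - γ • (T (xs (i + (n + 1))) - T (xs i))‖ :=
          norm_sub_norm_le _ _
        have e3 : ‖γ • (T (xs (i + (n + 1))) - T (xs i))‖ ≤ γ * E := by
          rw [norm_smul, Real.norm_eq_abs, abs_of_pos hγ0]
          exact mul_le_mul_of_nonneg_left (hTne _ (hmem _) _ (hmem _)) (le_of_lt hγ0)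
        linarith
      have h3 : E ≤ γ * (((n : ℝ) + 1) * d i) := by
        have := hE (n + 1) i
        push_cast at this
        exact this
      have h4 : d (i + 1) ≤ d i := hdmono i
      have h5 : (1 + (n : ℝ) * γ) * (1 - γ) ^ n ≤ 1 := hbern n
      have hkeyprod : 0 ≤ (d i - d (i + 1)) * (1 - (1 + (n : ℝ) * γ) * (1 - γ) ^ n) :=
        mul_nonneg (by linarith) (by linarith)
      have h1p : (B - γ * E) * (1 - γ) ^ n ≤ (1 - γ) * A * (1 - γ) ^ n :=
        mul_le_mul_of_nonneg_right h1 (le_of_lt hppos)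
      have h3p : γ * E * (1 - γ) ^ n ≤ γ * (γ * (((n : ℝ) + 1) * d i)) * (1 - γ) ^ n := by
        have h := mul_le_mul_of_nonneg_right h3 (le_of_lt hppos)
        nlinarith
      push_cast
      rw [pow_succ]
      nlinarith [IH, h1p, h3p, hkeyprod, hdnonneg i, hdnonneg (i + (n + 1)), hppos]
  -- limit of d
  have hbdd2 : BddBelow (Set.range d) := ⟨0, by rintro y ⟨n, rfl⟩; exact hdnonneg n⟩
  set r : ℝ := ⨅ n, d n with hr
  have hrtend : Tendsto d atTop (𝓝 r) := tendsto_atTop_ciInf hdanti hbdd2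
  have hrnonneg : 0 ≤ r := le_ciInf hdnonneg
  have hrle : ∀ n, r ≤ d n := fun n => ciInf_le hbdd2 n
  obtain ⟨R, hR⟩ := hbdd.exists_norm_le
  have hRnonneg : 0 ≤ R := le_trans (norm_nonneg x) (hR x hx)
  have hdistC : ∀ a ∈ C, ∀ b ∈ C, ‖a - b‖ ≤ 2 * R := by
    intro a ha b hb
    calc ‖a - b‖ ≤ ‖a‖ + ‖b‖ := norm_sub_le _ _
    _ ≤ 2 * R := by have := hR a ha; have := hR b hb; linarith
  have hrzero : r = 0 := by
    by_contra hne
    have hrpos : 0 < r := lt_of_le_of_ne hrnonneg (Ne.symm hne)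
    obtain ⟨n, hn⟩ := exists_nat_gt ((2 * R + 1) / (γ * r))
    have hγr : 0 < γ * r := mul_pos hγ0 hrpos
    have hn2 : 2 * R + 1 < (n : ℝ) * (γ * r) := (div_lt_iff₀ hγr).1 hn
    have hppos : (0 : ℝ) < (1 - γ) ^ n := pow_pos (by linarith) n
    obtain ⟨i, hi⟩ := exists_lt_of_ciInf_lt (show r < r + (1 - γ) ^ n by linarith)
    have hk := key n i
    have hnorm : ‖T (xs (i + n)) - xs i‖ ≤ 2 * R :=
      hdistC _ (hT (hmem _)) _ (hmem _)
    have hri := hrle i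
    have hrin := hrle (i + n)
    have hn0 : (0 : ℝ) ≤ (n : ℝ) := Nat.cast_nonneg n
    have hc0 : (0 : ℝ) ≤ 1 + (n : ℝ) * γ := by positivity
    have hstep1 : (1 + (n : ℝ) * γ) * r * (1 - γ) ^ n
        ≤ (1 + (n : ℝ) * γ) * d i * (1 - γ) ^ n :=
      mul_le_mul_of_nonneg_right (mul_le_mul_of_nonneg_left hri hc0) (le_of_lt hppos)
    have hstep2 : ‖T (xs (i + n)) - xs i‖ * (1 - γ) ^ n ≤ (2 * R) * (1 - γ) ^ n :=
      mul_le_mul_of_nonneg_right hnorm (le_of_lt hppos)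
    have hfin : (1 + (n : ℝ) * γ) * r * (1 - γ) ^ n < (2 * R + 1) * (1 - γ) ^ n := by
      nlinarith [hstep1, hk, hstep2, hi, hrin]
    have hfin2 : (1 + (n : ℝ) * γ) * r < 2 * R + 1 :=
      lt_of_mul_lt_mul_right hfin (le_of_lt hppos)
    nlinarith [hfin2, hn2, hrpos]
  have hd0 : Tendsto d atTop (𝓝 0) := by rwa [hrzero] at hrtend
  have heq : (fun n : ℕ => ‖S^[n + 1] x - S^[n] x‖) = fun n => γ * d n := by
    funext n
    exact hdiffnorm n
  have : Tendsto (fun n : ℕ => γ * d n) atTop (𝓝 0) := by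
    simpa using hd0.const_mul γ
  exact heq ▸ this
end

section
/- Let C be a bounded convex subset of a Banach space and U : C → C nonexpansive; set V = (1/2)I + (1/2)U. If (V^{k_α} x)_α is any subnet of the iterates at a point x ∈ C, then lim_α ‖U(V^{k_α} x) − V^{k_α} x‖ = 0; i.e., the iterates of V form an approximate fixed point net for U. -/
/-!
Let `V = (I + U)/2`, `yₙ = Vⁿ x` and `dₙ = ‖U yₙ - yₙ‖`.
Since `U yₙ - yₙ₊₁ = (U yₙ - yₙ)/2 = yₙ₊₁ - yₙ`, nonexpansiveness makes `dₙ`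
nonincreasing, with limit `r`. The Goebel–Kirk inequality `(1 + n/2) dᵢ ≤ ‖U yᵢ₊ₙ - yᵢ‖ + 2ⁿ (dᵢ - dᵢ₊ₙ)`
then gives, as `i → ∞`, `(1 + n/2) r ≤ diam C` for every `n`, so `r = 0`.
-/

open Filter Topology

section HalfAveraged

variable {X : Type*} [NormedAddCommGroup X] [NormedSpace ℝ X] {C : Set X} {U : X → X}

noncomputable def halfAveraged (U : X → X) (y : X) : X := (1 / 2 : ℝ) • y + (1 / 2 : ℝ) • U y

theorem Convex.mapsTo_halfAveraged (hconv : Convex ℝ C) (hU : Set.MapsTo U C C) :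
    Set.MapsTo (halfAveraged U) C C := fun _ hy =>
  hconv hy (hU hy) (by norm_num) (by norm_num) (by norm_num)

theorem norm_halfAveraged_sub_self (U : X → X) (y : X) :
    ‖halfAveraged U y - y‖ = ‖U y - y‖ / 2 := by
  have : halfAveraged U y - y = (1 / 2 : ℝ) • (U y - y) := by unfold halfAveraged; module
  rw [this, norm_smul, Real.norm_of_nonneg (by norm_num)]; ring

theorem norm_sub_halfAveraged (U : X → X) (y : X) :
    ‖U y - halfAveraged U y‖ = ‖U y - y‖ / 2 := by
  have : U y - halfAveraged U y = (1 / 2 : ℝ) • (U y - y) := by unfold halfAveraged; module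
  rw [this, norm_smul, Real.norm_of_nonneg (by norm_num)]; ring

theorem two_mul_norm_sub_halfAveraged_le (U : X → X) (y z : X) :
    2 * ‖z - halfAveraged U y‖ ≤ ‖z - y‖ + ‖z - U y‖ :=
  calc 2 * ‖z - halfAveraged U y‖ = ‖(2 : ℝ) • (z - halfAveraged U y)‖ := by
        rw [norm_smul, Real.norm_of_nonneg zero_le_two]
    _ = ‖(z - y) + (z - U y)‖ := by unfold halfAveraged; congr 1; module
    _ ≤ ‖z - y‖ + ‖z - U y‖ := norm_add_le _ _

theorem norm_sub_halfAveraged_le (hUne : ∀ y ∈ C, ∀ z ∈ C, ‖U y - U z‖ ≤ ‖y - z‖) {y : X}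
    (hy : y ∈ C) (hVy : halfAveraged U y ∈ C) :
    ‖U (halfAveraged U y) - halfAveraged U y‖ ≤ ‖U y - y‖ :=
  calc ‖U (halfAveraged U y) - halfAveraged U y‖
      ≤ ‖U (halfAveraged U y) - U y‖ + ‖U y - halfAveraged U y‖ :=
        norm_sub_le_norm_sub_add_norm_sub ..
    _ ≤ ‖halfAveraged U y - y‖ + ‖U y - halfAveraged U y‖ := by gcongr; exact hUne _ hVy _ hy
    _ = ‖U y - y‖ := by rw [norm_halfAveraged_sub_self, norm_sub_halfAveraged]; ring

variable (hV : Set.MapsTo (halfAveraged U) C C)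
  (hUne : ∀ y ∈ C, ∀ z ∈ C, ‖U y - U z‖ ≤ ‖y - z‖) {x : X} (hx : x ∈ C)
include hV hUne hx

theorem antitone_norm_sub_halfAveraged_iterate :
    Antitone fun n => ‖U ((halfAveraged U)^[n] x) - (halfAveraged U)^[n] x‖ := by
  refine antitone_nat_of_succ_le fun n => ?_
  simp only [Function.iterate_succ_apply']
  exact norm_sub_halfAveraged_le hUne (hV.iterate n hx) (hV (hV.iterate n hx))

theorem norm_halfAveraged_iterate_add_sub_le (i n : ℕ) :
    ‖(halfAveraged U)^[i + n] x - (halfAveraged U)^[i] x‖ ≤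
      n / 2 * ‖U ((halfAveraged U)^[i] x) - (halfAveraged U)^[i] x‖ := by
  set y : ℕ → X := fun n => (halfAveraged U)^[n] x
  set d : ℕ → ℝ := fun n => ‖U (y n) - y n‖
  have hd := antitone_norm_sub_halfAveraged_iterate hV hUne hx
  induction n with
  | zero => simp
  | succ n ih =>
    calc ‖y (i + (n + 1)) - y i‖ ≤ ‖y (i + n + 1) - y (i + n)‖ + ‖y (i + n) - y i‖ :=
          norm_sub_le_norm_sub_add_norm_sub ..
      _ = d (i + n) / 2 + ‖y (i + n) - y i‖ := by
          simp only [y, d, Function.iterate_succ_apply', norm_halfAveraged_sub_self]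
      _ ≤ d i / 2 + n / 2 * d i := by gcongr; exact hd (Nat.le_add_right i n)
      _ = (n + 1 : ℕ) / 2 * d i := by push_cast; ring

/-- The inequality of Goebel and Kirk for `V = (I + U)/2`. -/
theorem one_add_half_mul_norm_sub_halfAveraged_iterate_le (n i : ℕ) :
    (1 + n / 2) * ‖U ((halfAveraged U)^[i] x) - (halfAveraged U)^[i] x‖ ≤
      ‖U ((halfAveraged U)^[i + n] x) - (halfAveraged U)^[i] x‖ +
        2 ^ n * (‖U ((halfAveraged U)^[i] x) - (halfAveraged U)^[i] x‖ -
          ‖U ((halfAveraged U)^[i + n] x) - (halfAveraged U)^[i + n] x‖) := by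
  set y : ℕ → X := fun n => (halfAveraged U)^[n] x
  set d : ℕ → ℝ := fun n => ‖U (y n) - y n‖
  induction n generalizing i with
  | zero => simp
  | succ n ih =>
    have hsplit := two_mul_norm_sub_halfAveraged_le U (y i) (U (y (i + (n + 1))))
    have hne := hUne _ (hV.iterate (i + (n + 1)) hx) _ (hV.iterate i hx)
    have hdist := norm_halfAveraged_iterate_add_sub_le hV hUne hx i (n + 1)
    have hdi : d (i + 1) ≤ d i :=
      antitone_norm_sub_halfAveraged_iterate hV hUne hx (Nat.le_succ i)
    have hpow : (n : ℝ) + 2 ≤ 2 ^ (n + 1) := by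
      exact_mod_cast Nat.lt_two_pow_self (n := n + 1)
    have hgap : 0 ≤ (2 ^ (n + 1) - ((n : ℝ) + 2)) * (d i - d (i + 1)) :=
      mul_nonneg (by linarith) (by linarith)
    specialize ih (i + 1)
    rw [show i + 1 + n = i + (n + 1) by omega] at ih
    simp only [y, ← Function.iterate_succ_apply' (halfAveraged U)] at hsplit
    push_cast at hdist ⊢
    rw [pow_succ] at hgap ⊢
    linarith

theorem tendsto_norm_sub_halfAveraged_iterate (hU : Set.MapsTo U C C)
    (hbdd : Bornology.IsBounded C) :
    Tendsto (fun n => ‖U ((halfAveraged U)^[n] x) - (halfAveraged U)^[n] x‖) atTop (𝓝 0) := by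
  set d : ℕ → ℝ := fun n => ‖U ((halfAveraged U)^[n] x) - (halfAveraged U)^[n] x‖
  have hd := antitone_norm_sub_halfAveraged_iterate hV hUne hx
  have hbdd_below : BddBelow (Set.range d) := ⟨0, by rintro _ ⟨n, rfl⟩; exact norm_nonneg _⟩
  set r := ⨅ n, d n
  have hlim : Tendsto d atTop (𝓝 r) := tendsto_atTop_ciInf hd hbdd_below
  obtain ⟨D, hD⟩ := Metric.isBounded_iff.mp hbdd
  have hrD : ∀ n : ℕ, (1 + n / 2) * r ≤ D := by
    intro n
    have hshift : Tendsto (fun i => d (i + n)) atTop (𝓝 r) :=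
      hlim.comp (tendsto_add_atTop_nat n)
    refine le_of_tendsto_of_tendsto (hlim.const_mul _)
      (by simpa using tendsto_const_nhds (x := D).add ((hlim.sub hshift).const_mul (2 ^ n)))
      (Eventually.of_forall fun i => ?_)
    have hGK := one_add_half_mul_norm_sub_halfAveraged_iterate_le hV hUne hx n i
    have hDi := hD (hU (hV.iterate (i + n) hx)) (hV.iterate i hx)
    rw [dist_eq_norm] at hDi
    linarith
  have hr_nonneg : 0 ≤ r := le_ciInf fun n => norm_nonneg _
  have hr_nonpos : r ≤ 0 := by
    refine ge_of_tendsto (tendsto_const_div_atTop_nhds_zero_nat (2 * D))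
      ((eventually_gt_atTop 0).mono fun n hn => ?_)
    rw [le_div_iff₀ (by positivity)]
    linarith [hrD n]
  simpa [le_antisymm hr_nonpos hr_nonneg] using hlim

end HalfAveraged

theorem stmt11_general {X : Type*} [NormedAddCommGroup X] [NormedSpace ℝ X]
    (C : Set X) (hbdd : Bornology.IsBounded C) (hconv : Convex ℝ C)
    (U : X → X) (hU : Set.MapsTo U C C)
    (hUne : ∀ y ∈ C, ∀ z ∈ C, ‖U y - U z‖ ≤ ‖y - z‖)
    (x : X) (hx : x ∈ C)
    {ι : Type*} (l : Filter ι) (k : ι → ℕ) (hk : Tendsto k l atTop) :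
    Tendsto (fun α =>
        ‖U ((fun y => (1 / 2 : ℝ) • y + (1 / 2 : ℝ) • U y)^[k α] x) -
         (fun y => (1 / 2 : ℝ) • y + (1 / 2 : ℝ) • U y)^[k α] x‖) l (𝓝 0) :=
  (tendsto_norm_sub_halfAveraged_iterate (hconv.mapsTo_halfAveraged hU) hUne hx hU hbdd).comp hk

/-- With `U : C → C` nonexpansive on a bounded convex set `C` and
`V = (1/2)I + (1/2)U`, any subnet of the iterates `(V^k x)` is an approximate
fixed point net for `U`: `‖U(V^{k_α} x) − V^{k_α} x‖ → 0`. -/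
theorem stmt11 {X : Type*} [NormedAddCommGroup X] [NormedSpace ℝ X] [CompleteSpace X]
    (C : Set X) (hbdd : Bornology.IsBounded C) (hconv : Convex ℝ C)
    (U : X → X) (hU : Set.MapsTo U C C)
    (hUne : ∀ y ∈ C, ∀ z ∈ C, ‖U y - U z‖ ≤ ‖y - z‖)
    (x : X) (hx : x ∈ C)
    {ι : Type*} (l : Filter ι) [l.NeBot] (k : ι → ℕ) (hk : Tendsto k l atTop) :
    Tendsto (fun α =>
        ‖U ((fun y => (1 / 2 : ℝ) • y + (1 / 2 : ℝ) • U y)^[k α] x) -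
         (fun y => (1 / 2 : ℝ) • y + (1 / 2 : ℝ) • U y)^[k α] x‖) l (𝓝 0) :=
  stmt11_general C hbdd hconv U hU hUne x hx l k hk
end

section
/- Let C be a nonempty weak* compact convex subset of a dual Banach space, let {T₁, …, T_{n+1}} be commuting weak*-continuous nonexpansive self-maps of C, and let R_n : C → ⋂_{i≤n} Fix T_i be a nonexpansive retraction. Set R̃ x = (1/2)x + (1/2)T_{n+1}R_n x. Then for every x ∈ C and every subnet (R̃^{k_α} x) of the iterates, setting r_α = R̃^{k_α} x one has lim_α ‖T_{n+1} R_n r_α − r_α‖ = 0, lim_α ‖R_n r_α − r_α‖ = 0, and lim_α ‖T_m r_α − r_α‖ = 0 for every m ≤ n+1. -/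
/-!
The iterates `r_k = R̃^k x` form the midpoint iteration `r_{k+1} = (r_k + S r_k) / 2` of the
nonexpansive map `S = T_{n+1} ∘ R_n`. They stay in `C`, which is norm bounded: by Baire's theorem
on the compact space `C` some weak*-open piece of `C` lies in a norm ball, and convexity spreads
this bound to all of `C`. Ishikawa's theorem then gives `‖S r_k - r_k‖ → 0`, hence along every
subnet. Since `S r` is a common fixed point of `T_1, …, T_n`, it is fixed by `R_n`, which yields
`‖R_n r - r‖ ≤ 2 ‖S r - r‖` and `‖T_m r - r‖ ≤ 4 ‖S r - r‖`.
-/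

open Filter Topology

section Seminorm

variable {X F : Type*} [AddGroup X] [FunLike F X ℝ] [AddGroupSeminormClass F X ℝ] (p : F)

lemma map_sub_le_map_sub_add_map_sub (x y z : X) : p (x - z) ≤ p (x - y) + p (y - z) := by
  simpa using map_add_le_add p (x - y) (y - z)

end Seminorm

section MidpointIteration

variable {X : Type*} [AddCommGroup X] [Module ℝ X] (p : Seminorm ℝ X) {u v : ℕ → X}

lemma seminorm_succ_sub_of_midpoint
    (hrec : ∀ k, u (k + 1) = (1 / 2 : ℝ) • u k + (1 / 2 : ℝ) • v k) (k : ℕ) :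
    p (u (k + 1) - u k) = p (v k - u k) / 2 := by
  rw [hrec k, show (1 / 2 : ℝ) • u k + (1 / 2 : ℝ) • v k - u k = (1 / 2 : ℝ) • (v k - u k) by
    module, map_smul_eq_mul]
  norm_num
  ring

lemma antitone_seminorm_sub_of_midpoint
    (hrec : ∀ k, u (k + 1) = (1 / 2 : ℝ) • u k + (1 / 2 : ℝ) • v k)
    (hv : ∀ i j, p (v i - v j) ≤ p (u i - u j)) :
    Antitone fun k => p (v k - u k) := by
  refine antitone_nat_of_succ_le fun k => ?_
  have hsplit : v (k + 1) - u (k + 1) = (v (k + 1) - v k) + (1 / 2 : ℝ) • (v k - u k) := by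
    rw [hrec k]; module
  calc p (v (k + 1) - u (k + 1))
      ≤ p (v (k + 1) - v k) + p ((1 / 2 : ℝ) • (v k - u k)) := hsplit ▸ map_add_le_add p _ _
    _ ≤ p (u (k + 1) - u k) + p (v k - u k) / 2 := by
      rw [map_smul_eq_mul]
      norm_num
      linarith [hv (k + 1) k]
    _ = p (v k - u k) := by rw [seminorm_succ_sub_of_midpoint p hrec]; ring

lemma seminorm_add_sub_le_of_midpoint
    (hrec : ∀ k, u (k + 1) = (1 / 2 : ℝ) • u k + (1 / 2 : ℝ) • v k)
    (hv : ∀ i j, p (v i - v j) ≤ p (u i - u j)) (i N : ℕ) :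
    p (u (i + N) - u i) ≤ N / 2 * p (v i - u i) := by
  induction N with
  | zero => simp
  | succ N ih =>
    have hstep := seminorm_succ_sub_of_midpoint p hrec (i + N)
    have hanti := antitone_seminorm_sub_of_midpoint p hrec hv (Nat.le_add_right i N)
    calc p (u (i + (N + 1)) - u i) ≤ p (u (i + N + 1) - u (i + N)) + p (u (i + N) - u i) :=
          map_sub_le_map_sub_add_map_sub p _ _ _
      _ ≤ ((N + 1 : ℕ) : ℝ) / 2 * p (v i - u i) := by
          simp only at hanti
          push_cast
          linarith

/-- The Goebel–Kirk inequality; the induction step rests on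
`2 (v (i+N+1) - u (i+1)) = (v (i+N+1) - u i) + (v (i+N+1) - v i)`. -/
lemma goebel_kirk_of_midpoint
    (hrec : ∀ k, u (k + 1) = (1 / 2 : ℝ) • u k + (1 / 2 : ℝ) • v k)
    (hv : ∀ i j, p (v i - v j) ≤ p (u i - u j)) (N : ℕ) :
    ∀ i, (1 + N / 2) * p (v i - u i) ≤
      p (v (i + N) - u i) + 2 ^ N * (p (v i - u i) - p (v (i + N) - u (i + N))) := by
  induction N with
  | zero => intro i; simp
  | succ N ih =>
    intro i
    have hdouble : 2 * p (v (i + (N + 1)) - u (i + 1)) ≤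
        p (v (i + (N + 1)) - u i) + p (u (i + (N + 1)) - u i) := by
      have hsplit : (2 : ℝ) • (v (i + (N + 1)) - u (i + 1)) =
          (v (i + (N + 1)) - u i) + (v (i + (N + 1)) - v i) := by
        rw [hrec i]; module
      have := map_add_le_add p (v (i + (N + 1)) - u i) (v (i + (N + 1)) - v i)
      rw [← hsplit, map_smul_eq_mul] at this
      norm_num at this
      linarith [hv (i + (N + 1)) i]
    have hih := ih (i + 1)
    rw [show i + 1 + N = i + (N + 1) by omega] at hih
    have htele := seminorm_add_sub_le_of_midpoint p hrec hv i (N + 1)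
    have hanti := antitone_seminorm_sub_of_midpoint p hrec hv (Nat.le_succ i)
    have hpow : (N + 2 : ℝ) ≤ 2 ^ (N + 1) := by
      have := one_add_mul_le_pow (a := (1 : ℝ)) (by norm_num) (N + 1)
      norm_num at this
      linarith
    have hprod : 0 ≤ (2 ^ (N + 1) - (N + 2)) * (p (v i - u i) - p (v (i + 1) - u (i + 1))) :=
      mul_nonneg (by linarith) (by simpa using hanti)
    push_cast at htele ⊢
    rw [pow_succ] at hprod ⊢
    linarith

/-- Ishikawa's theorem, for the averaging parameter `1 / 2`. -/
lemma tendsto_seminorm_sub_of_midpoint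
    (hrec : ∀ k, u (k + 1) = (1 / 2 : ℝ) • u k + (1 / 2 : ℝ) • v k)
    (hv : ∀ i j, p (v i - v j) ≤ p (u i - u j)) {M : ℝ} (hbdd : ∀ i j, p (v i - u j) ≤ M) :
    Tendsto (fun k => p (v k - u k)) atTop (𝓝 0) := by
  set d : ℕ → ℝ := fun k => p (v k - u k)
  have hlim : Tendsto d atTop (𝓝 (⨅ k, d k)) :=
    tendsto_atTop_ciInf (antitone_seminorm_sub_of_midpoint p hrec hv)
      ⟨0, by rintro _ ⟨k, rfl⟩; exact apply_nonneg p _⟩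
  set c := ⨅ k, d k
  have hc : 0 ≤ c := le_ciInf fun k => apply_nonneg p _
  have hbound (N : ℕ) : (1 + N / 2) * c ≤ M := by
    have hrhs : Tendsto (fun i => M + 2 ^ N * (d i - d (i + N))) atTop (𝓝 M) := by
      simpa using tendsto_const_nhds.add
        ((hlim.sub (hlim.comp (tendsto_add_atTop_nat N))).const_mul ((2 : ℝ) ^ N))
    refine le_of_tendsto_of_tendsto' (hlim.const_mul _) hrhs fun i => ?_
    linarith [goebel_kirk_of_midpoint p hrec hv N i, hbdd (i + N) i]
  have hc0 : c = 0 := by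
    refine le_antisymm (not_lt.mp fun hpos => ?_) hc
    obtain ⟨N, hN⟩ := exists_nat_gt (2 * M / c)
    rw [div_lt_iff₀ hpos] at hN
    linarith [hbound N]
  rwa [hc0] at hlim

end MidpointIteration

namespace WeakDual

variable {E : Type*} [NormedAddCommGroup E] [NormedSpace ℝ E] {C : Set (WeakDual ℝ E)}

/-- Baire category theorem on the compact space `C`, covered by the weak*-closed balls. -/
lemma exists_isOpen_inter_subset_closedBall (hcomp : IsCompact C) (hne : C.Nonempty) :
    ∃ f₀ ∈ C, ∃ W, IsOpen W ∧ f₀ ∈ W ∧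
      ∃ m : ℝ, C ∩ W ⊆ toStrongDual ⁻¹' Metric.closedBall 0 m := by
  have : CompactSpace C := isCompact_iff_compactSpace.mp hcomp
  have : Nonempty C := hne.to_subtype
  set B : ℕ → Set C := fun m =>
    ((↑) : C → WeakDual ℝ E) ⁻¹' (toStrongDual ⁻¹' Metric.closedBall 0 m)
  obtain ⟨m, f₀, hf₀⟩ := nonempty_interior_of_iUnion_of_closed (f := B)
    (fun m => (isClosed_closedBall 0 m).preimage continuous_subtype_val)
    (Set.eq_univ_of_forall fun f => Set.mem_iUnion.2 <| by simpa [B] using exists_nat_ge _)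
  obtain ⟨W, hW, hWint⟩ := isOpen_induced_iff.mp (isOpen_interior (s := B m))
  refine ⟨f₀, f₀.2, W, hW, ?_, m, fun f ⟨hfC, hfW⟩ => ?_⟩
  · rw [← hWint] at hf₀
    exact hf₀
  · have hB : (⟨f, hfC⟩ : C) ∈ B m :=
      interior_subset (hWint ▸ hfW : (⟨f, hfC⟩ : C) ∈ interior (B m))
    exact hB

lemma exists_norm_le_of_isCompact_of_convex (hcomp : IsCompact C) (hconv : Convex ℝ C) :
    ∃ M, ∀ f ∈ C, ‖toStrongDual f‖ ≤ M := by
  rcases C.eq_empty_or_nonempty with rfl | hne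
  · exact ⟨0, by simp⟩
  obtain ⟨f₀, hf₀, W, hW, hf₀W, m, hm⟩ := exists_isOpen_inter_subset_closedBall hcomp hne
  have hnhds : (f₀ + ·) ⁻¹' W ∈ 𝓝 (0 : WeakDual ℝ E) :=
    (continuous_const_add f₀).continuousAt.preimage_mem_nhds (by simpa using hW.mem_nhds hf₀W)
  -- the neighbourhood `W - f₀` of `0` absorbs the compact set `C - f₀`
  have habs := (hcomp.image (continuous_sub_right f₀)).isVonNBounded ℝ hnhds
  obtain ⟨c, hc, ⟨hc0, hc1⟩⟩ := ((habs.eventually_nhds_zero (mem_of_mem_nhds hnhds)).filter_mono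
    nhdsWithin_le_nhds |>.and (Ioo_mem_nhdsGT one_pos)).exists
  refine ⟨‖toStrongDual f₀‖ + (m + ‖toStrongDual f₀‖) / c, fun f hf => ?_⟩
  have hmem : f₀ + c • (f - f₀) ∈ C ∩ W :=
    ⟨hconv.add_smul_sub_mem hf₀ hf ⟨hc0.le, hc1.le⟩, hc ⟨f, hf, rfl⟩⟩
  have hnorm : ‖toStrongDual f₀ + c • (toStrongDual f - toStrongDual f₀)‖ ≤ m := by
    simpa using hm hmem
  have hscaled : c * ‖toStrongDual f - toStrongDual f₀‖ ≤ m + ‖toStrongDual f₀‖ := by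
    have := norm_sub_le (toStrongDual f₀ + c • (toStrongDual f - toStrongDual f₀))
      (toStrongDual f₀)
    rw [add_sub_cancel_left, norm_smul, Real.norm_of_nonneg hc0.le] at this
    linarith
  calc ‖toStrongDual f‖ ≤ ‖toStrongDual f₀‖ + ‖toStrongDual f - toStrongDual f₀‖ :=
        norm_le_insert' _ _
    _ ≤ _ := by gcongr; rwa [le_div_iff₀ hc0, mul_comm]

end WeakDual

section Retraction

variable {X : Type*} {C : Set X} {n : ℕ} {T : Fin (n + 1) → X → X} {R : X → X}

lemma retraction_fixes_last_apply_retraction (hTmaps : ∀ i, Set.MapsTo (T i) C C)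
    (hcomm : ∀ i j, ∀ x ∈ C, T i (T j x) = T j (T i x))
    (hRmaps : Set.MapsTo R C {x | x ∈ C ∧ ∀ i : Fin n, T i.castSucc x = x})
    (hRfix : ∀ x, (x ∈ C ∧ ∀ i : Fin n, T i.castSucc x = x) → R x = x) {y : X} (hy : y ∈ C) :
    R (T (Fin.last n) (R y)) = T (Fin.last n) (R y) := by
  refine hRfix _ ⟨hTmaps _ (hRmaps hy).1, fun i => ?_⟩
  rw [hcomm _ _ _ (hRmaps hy).1, (hRmaps hy).2 i]

variable [AddGroup X] {F : Type*} [FunLike F X ℝ] [AddGroupSeminormClass F X ℝ] (p : F)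

lemma map_retraction_sub_le (hTmaps : ∀ i, Set.MapsTo (T i) C C)
    (hcomm : ∀ i j, ∀ x ∈ C, T i (T j x) = T j (T i x))
    (hRmaps : Set.MapsTo R C {x | x ∈ C ∧ ∀ i : Fin n, T i.castSucc x = x})
    (hRfix : ∀ x, (x ∈ C ∧ ∀ i : Fin n, T i.castSucc x = x) → R x = x)
    (hRne : ∀ y ∈ C, ∀ z ∈ C, p (R y - R z) ≤ p (y - z)) {y : X} (hy : y ∈ C) :
    p (R y - y) ≤ 2 * p (T (Fin.last n) (R y) - y) := by
  set s := T (Fin.last n) (R y)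
  have hs : R s = s := retraction_fixes_last_apply_retraction hTmaps hcomm hRmaps hRfix hy
  calc p (R y - y) ≤ p (R y - R s) + p (s - y) := by
        rw [hs]; exact map_sub_le_map_sub_add_map_sub p _ _ _
    _ ≤ p (y - s) + p (s - y) := by gcongr; exact hRne _ hy _ (hTmaps _ (hRmaps hy).1)
    _ = 2 * p (s - y) := by rw [map_sub_rev p y s]; ring

lemma map_sub_le_of_retraction (hTmaps : ∀ i, Set.MapsTo (T i) C C)
    (hTne : ∀ i, ∀ y ∈ C, ∀ z ∈ C, p (T i y - T i z) ≤ p (y - z))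
    (hcomm : ∀ i j, ∀ x ∈ C, T i (T j x) = T j (T i x))
    (hRmaps : Set.MapsTo R C {x | x ∈ C ∧ ∀ i : Fin n, T i.castSucc x = x})
    (hRfix : ∀ x, (x ∈ C ∧ ∀ i : Fin n, T i.castSucc x = x) → R x = x)
    (hRne : ∀ y ∈ C, ∀ z ∈ C, p (R y - R z) ≤ p (y - z)) (m : Fin (n + 1)) {y : X}
    (hy : y ∈ C) :
    p (T m y - y) ≤ 4 * p (T (Fin.last n) (R y) - y) := by
  have hR := map_retraction_sub_le p hTmaps hcomm hRmaps hRfix hRne hy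
  have hTR : p (T m (R y) - y) ≤ 2 * p (T (Fin.last n) (R y) - y) := by
    induction m using Fin.lastCases with
    | last => linarith [apply_nonneg p (T (Fin.last n) (R y) - y)]
    | cast i => rw [(hRmaps hy).2 i]; exact hR
  calc p (T m y - y) ≤ p (T m y - T m (R y)) + p (T m (R y) - y) :=
        map_sub_le_map_sub_add_map_sub p _ _ _
    _ ≤ p (R y - y) + p (T m (R y) - y) := by
        gcongr; exact (hTne m _ hy _ (hRmaps hy).1).trans_eq (map_sub_rev p _ _)
    _ ≤ 4 * p (T (Fin.last n) (R y) - y) := by linarith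

end Retraction

theorem stmt12_general {E : Type*} [NormedAddCommGroup E] [NormedSpace ℝ E]
    (C : Set (WeakDual ℝ E)) (hcomp : IsCompact C) (hconv : Convex ℝ C)
    (n : ℕ) (T : Fin (n + 1) → WeakDual ℝ E → WeakDual ℝ E)
    (hTmaps : ∀ i, Set.MapsTo (T i) C C)
    (hTne : ∀ i, ∀ y ∈ C, ∀ z ∈ C,
      ‖WeakDual.toStrongDual (T i y - T i z)‖ ≤ ‖WeakDual.toStrongDual (y - z)‖)
    (hcomm : ∀ i j, ∀ x ∈ C, T i (T j x) = T j (T i x))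
    (R : WeakDual ℝ E → WeakDual ℝ E)
    (hRmaps : Set.MapsTo R C {x | x ∈ C ∧ ∀ i : Fin n, T i.castSucc x = x})
    (hRfix : ∀ x, (x ∈ C ∧ ∀ i : Fin n, T i.castSucc x = x) → R x = x)
    (hRne : ∀ y ∈ C, ∀ z ∈ C,
      ‖WeakDual.toStrongDual (R y - R z)‖ ≤ ‖WeakDual.toStrongDual (y - z)‖)
    (x : WeakDual ℝ E) (hx : x ∈ C)
    {ι : Type*} (l : Filter ι) (k : ι → ℕ) (hk : Tendsto k l atTop) :
    letI Rt : WeakDual ℝ E → WeakDual ℝ E :=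
      fun y => (1 / 2 : ℝ) • y + (1 / 2 : ℝ) • T (Fin.last n) (R y)
    letI r : ι → WeakDual ℝ E := fun α => Rt^[k α] x
    Tendsto (fun α =>
        ‖WeakDual.toStrongDual (T (Fin.last n) (R (r α)) - r α)‖) l (𝓝 0) ∧
    Tendsto (fun α => ‖WeakDual.toStrongDual (R (r α) - r α)‖) l (𝓝 0) ∧
    ∀ m : Fin (n + 1),
      Tendsto (fun α => ‖WeakDual.toStrongDual (T m (r α) - r α)‖) l (𝓝 0) := by
  beta_reduce
  set Rt : WeakDual ℝ E → WeakDual ℝ E :=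
    fun y => (1 / 2 : ℝ) • y + (1 / 2 : ℝ) • T (Fin.last n) (R y)
  let p : Seminorm ℝ (WeakDual ℝ E) :=
    (normSeminorm ℝ (StrongDual ℝ E)).comp WeakDual.toStrongDual.toLinearMap
  obtain ⟨M, hM⟩ := WeakDual.exists_norm_le_of_isCompact_of_convex hcomp hconv
  have hRt : Set.MapsTo Rt C C := fun y hy =>
    hconv hy (hTmaps _ (hRmaps hy).1) (by norm_num) (by norm_num) (by norm_num)
  have horbit (j : ℕ) : Rt^[j] x ∈ C := hRt.iterate j hx
  have hasymp : Tendsto (fun j => p (T (Fin.last n) (R (Rt^[j] x)) - Rt^[j] x)) atTop (𝓝 0) :=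
    tendsto_seminorm_sub_of_midpoint p (fun j => Function.iterate_succ_apply' Rt j x)
      (fun i j => (hTne _ _ (hRmaps (horbit i)).1 _ (hRmaps (horbit j)).1).trans
        (hRne _ (horbit i) _ (horbit j)))
      (M := M + M) fun i j => (map_sub_le_add p _ _).trans
        (add_le_add (hM _ (hTmaps _ (hRmaps (horbit i)).1)) (hM _ (horbit j)))
  have hlast := hasymp.comp hk
  refine ⟨hlast, ?_, fun m => ?_⟩
  · refine squeeze_zero (fun _ => apply_nonneg p _) (fun α => map_retraction_sub_le p hTmaps
      hcomm hRmaps hRfix hRne (horbit (k α))) ?_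
    simpa using hlast.const_mul 2
  · refine squeeze_zero (fun _ => apply_nonneg p _) (fun α => map_sub_le_of_retraction p hTmaps
      hTne hcomm hRmaps hRfix hRne m (horbit (k α))) ?_
    simpa using hlast.const_mul 4

/-- For commuting weak*-continuous nonexpansive maps `T₁,…,T_{n+1}`
on a nonempty weak* compact convex `C`, a nonexpansive retraction `Rₙ` of `C`
onto `⋂_{i≤n} Fix Tᵢ`, and `R̃ x = (1/2)x + (1/2)T_{n+1}(Rₙ x)`, every subnet
`r_α = R̃^{k_α} x` of the iterates at `x ∈ C` satisfies
`‖T_{n+1} Rₙ r_α − r_α‖ → 0`, `‖Rₙ r_α − r_α‖ → 0`, and `‖T_m r_α − r_α‖ → 0`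
for every `m ≤ n+1`. -/
theorem stmt12 {E : Type*} [NormedAddCommGroup E] [NormedSpace ℝ E]
    (C : Set (WeakDual ℝ E)) (hne : C.Nonempty) (hcomp : IsCompact C) (hconv : Convex ℝ C)
    (n : ℕ) (T : Fin (n + 1) → WeakDual ℝ E → WeakDual ℝ E)
    (hTmaps : ∀ i, Set.MapsTo (T i) C C)
    (hTc : ∀ i, ContinuousOn (T i) C)
    (hTne : ∀ i, ∀ y ∈ C, ∀ z ∈ C,
      ‖WeakDual.toStrongDual (T i y - T i z)‖ ≤ ‖WeakDual.toStrongDual (y - z)‖)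
    (hcomm : ∀ i j, ∀ x ∈ C, T i (T j x) = T j (T i x))
    (R : WeakDual ℝ E → WeakDual ℝ E)
    (hRmaps : Set.MapsTo R C {x | x ∈ C ∧ ∀ i : Fin n, T i.castSucc x = x})
    (hRfix : ∀ x, (x ∈ C ∧ ∀ i : Fin n, T i.castSucc x = x) → R x = x)
    (hRne : ∀ y ∈ C, ∀ z ∈ C,
      ‖WeakDual.toStrongDual (R y - R z)‖ ≤ ‖WeakDual.toStrongDual (y - z)‖)
    (x : WeakDual ℝ E) (hx : x ∈ C)
    {ι : Type*} (l : Filter ι) [l.NeBot] (k : ι → ℕ) (hk : Tendsto k l atTop) :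
    letI Rt : WeakDual ℝ E → WeakDual ℝ E :=
      fun y => (1 / 2 : ℝ) • y + (1 / 2 : ℝ) • T (Fin.last n) (R y)
    letI r : ι → WeakDual ℝ E := fun α => Rt^[k α] x
    Tendsto (fun α =>
        ‖WeakDual.toStrongDual (T (Fin.last n) (R (r α)) - r α)‖) l (𝓝 0) ∧
    Tendsto (fun α => ‖WeakDual.toStrongDual (R (r α) - r α)‖) l (𝓝 0) ∧
    ∀ m : Fin (n + 1),
      Tendsto (fun α => ‖WeakDual.toStrongDual (T m (r α) - r α)‖) l (𝓝 0) :=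
  stmt12_general C hcomp hconv n T hTmaps hTne hcomm R hRmaps hRfix hRne x hx l k hk
end
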